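/- arXiv:math/0311057 — 2 statements merged into one kernel-verified Lean document; each statement's English description precedes it below -/
import Mathlib

section
/- Let Λ be a lattice and let h, z, f ∈ Λ satisfy ⟨h,h⟩ = 2, ⟨z,z⟩ = −2, ⟨h,z⟩ = 0 and h − z = 2f. Let U = ℤf + ℤz and U⊥ = {v ∈ Λ : ⟨v,f⟩ = 0 and ⟨v,z⟩ = 0}. Then the orthogonal complement h⊥ = {v ∈ Λ : ⟨v,h⟩ = 0} is the internal direct sum of ℤz and U⊥, and this decomposition is orthogonal: ⟨z,w⟩ = 0 for every w ∈ U⊥. -/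
/-- The orthogonal complement `{w ∈ Λ : ⟨w,u⟩ = 0 for all u ∈ U}` of a submodule
`U` of a lattice `Λ` with bilinear form `B`. -/
def orthoCompl {Λ : Type*} [AddCommGroup Λ] [Module ℤ Λ]
    (B : Λ →ₗ[ℤ] Λ →ₗ[ℤ] ℤ) (U : Submodule ℤ Λ) : Submodule ℤ Λ where
  carrier := {w | ∀ u ∈ U, B w u = 0}
  add_mem' := by
    intro a b ha hb u hu
    simp [map_add, LinearMap.add_apply, ha u hu, hb u hu]
  zero_mem' := by
    intro u hu
    simp
  smul_mem' := by
    intro c x hx u hu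
    simp [map_smul, LinearMap.smul_apply, hx u hu]

/-!
With `f = (h - z)/2`, orthogonality to `h` reads `⟨v,z⟩ = -2⟨v,f⟩`, and `⟨z,f⟩ = 1`.
Hence `v - ⟨v,f⟩ z` is orthogonal to both `f` and `z`, which splits `v` along `ℤz ⊕ U⊥`;
the sum is direct because `⟨z,z⟩ ≠ 0`.
-/

section

variable {Λ : Type*} [AddCommGroup Λ] (B : Λ →ₗ[ℤ] Λ →ₗ[ℤ] ℤ)

theorem mem_orthoCompl_iff_le_ker (U : Submodule ℤ Λ) (w : Λ) :
    w ∈ orthoCompl B U ↔ U ≤ LinearMap.ker (B w) :=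
  Iff.rfl

theorem orthoCompl_antitone : Antitone (orthoCompl B) :=
  fun _ _ hUV _ hw u hu => hw u (hUV hu)

theorem mem_orthoCompl_span_singleton_iff (u w : Λ) :
    w ∈ orthoCompl B (Submodule.span ℤ {u}) ↔ B w u = 0 := by
  rw [mem_orthoCompl_iff_le_ker, Submodule.span_singleton_le_iff_mem, LinearMap.mem_ker]

theorem mem_orthoCompl_span_pair_iff (u₁ u₂ w : Λ) :
    w ∈ orthoCompl B (Submodule.span ℤ {u₁, u₂}) ↔ B w u₁ = 0 ∧ B w u₂ = 0 := by
  simp only [mem_orthoCompl_iff_le_ker, Submodule.span_le, Set.insert_subset_iff,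
    Set.singleton_subset_iff, SetLike.mem_coe, LinearMap.mem_ker]

theorem span_singleton_inf_orthoCompl_eq_bot {z : Λ} (hz : B z z ≠ 0)
    {U : Submodule ℤ Λ} (hzU : z ∈ U) :
    Submodule.span ℤ {z} ⊓ orthoCompl B U = ⊥ := by
  refine (Submodule.eq_bot_iff _).2 fun v ⟨hvz, hvU⟩ => ?_
  obtain ⟨a, rfl⟩ := Submodule.mem_span_singleton.1 hvz
  have ha : a * B z z = 0 := by simpa using hvU z hzU
  rw [(mul_eq_zero.1 ha).resolve_right hz]
  exact zero_smul ℤ z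

theorem mem_span_singleton_sup_orthoCompl_span_pair {f z v : Λ} (hzf : B z f = 1)
    (hvz : B v z = B v f * B z z) :
    v ∈ Submodule.span ℤ {z} ⊔ orthoCompl B (Submodule.span ℤ {f, z}) := by
  refine Submodule.mem_sup.2 ⟨B v f • z, zsmul_mem (Submodule.mem_span_singleton_self z) _,
    v - B v f • z, (mem_orthoCompl_span_pair_iff B f z _).2 ⟨?_, ?_⟩, add_sub_cancel _ _⟩
  · simp [hzf]
  · simp [hvz]

end

theorem stmt9_general {Λ : Type*} [AddCommGroup Λ] [Module ℤ Λ]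
    (B : Λ →ₗ[ℤ] Λ →ₗ[ℤ] ℤ) (hsymm : ∀ x y, B x y = B y x)
    (h z f : Λ) (hz : B z z = -2) (hhz : B h z = 0)
    (hf : h - z = (2 : ℤ) • f) :
    orthoCompl B (Submodule.span ℤ ({h} : Set Λ))
        = Submodule.span ℤ ({z} : Set Λ) ⊔ orthoCompl B (Submodule.span ℤ ({f, z} : Set Λ)) ∧
    Submodule.span ℤ ({z} : Set Λ) ⊓ orthoCompl B (Submodule.span ℤ ({f, z} : Set Λ)) = ⊥ ∧
    ∀ w ∈ orthoCompl B (Submodule.span ℤ ({f, z} : Set Λ)), B z w = 0 := by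
  -- `Module ℤ Λ` is a subsingleton, so we may take `•` to be `zsmul`.
  obtain rfl : ‹Module ℤ Λ› = AddCommGroup.toIntModule Λ := Subsingleton.elim _ _
  have hf_pairing : ∀ v, B v h - B v z = 2 * B v f := fun v => by
    simpa using congrArg (B v) hf
  have hzf : B z f = 1 := by
    have := hf_pairing z
    rw [hsymm z h, hhz, hz] at this
    omega
  have hz_mem : z ∈ Submodule.span ℤ ({f, z} : Set Λ) := Submodule.subset_span (by simp)
  have hh_mem : h ∈ Submodule.span ℤ ({f, z} : Set Λ) := by
    rw [show h = (2 : ℤ) • f + z by rw [← hf, sub_add_cancel]]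
    exact add_mem (zsmul_mem (Submodule.subset_span (by simp)) _) hz_mem
  have hle : Submodule.span ℤ {z} ⊔ orthoCompl B (Submodule.span ℤ {f, z})
      ≤ orthoCompl B (Submodule.span ℤ {h}) := by
    refine sup_le ?_ (orthoCompl_antitone B ((Submodule.span_singleton_le_iff_mem _ _).2 hh_mem))
    rw [Submodule.span_singleton_le_iff_mem, mem_orthoCompl_span_singleton_iff, hsymm, hhz]
  have hge : orthoCompl B (Submodule.span ℤ {h})
      ≤ Submodule.span ℤ {z} ⊔ orthoCompl B (Submodule.span ℤ {f, z}) := fun v hv => by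
    have hvh := (mem_orthoCompl_span_singleton_iff B h v).1 hv
    refine mem_span_singleton_sup_orthoCompl_span_pair B hzf ?_
    have := hf_pairing v
    rw [hz]
    omega
  exact ⟨le_antisymm hge hle, span_singleton_inf_orthoCompl_eq_bot B (by omega) hz_mem,
    fun w hw => hsymm z w ▸ hw z hz_mem⟩

/-- Let `Λ` be a lattice with symmetric bilinear form `B`, and let
`h, z, f ∈ Λ` satisfy `⟨h,h⟩ = 2`, `⟨z,z⟩ = −2`, `⟨h,z⟩ = 0` and `h − z = 2f`.
Let `U = ℤf + ℤz` and `U⊥` its orthogonal complement.  Then `h⊥` is the internal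
direct sum of `ℤz` and `U⊥`, orthogonally: `⟨z,w⟩ = 0` for every `w ∈ U⊥`. -/
theorem stmt9 {Λ : Type*} [AddCommGroup Λ] [Module ℤ Λ]
    [Module.Free ℤ Λ] [Module.Finite ℤ Λ]
    (B : Λ →ₗ[ℤ] Λ →ₗ[ℤ] ℤ) (hsymm : ∀ x y, B x y = B y x)
    (h z f : Λ) (hh : B h h = 2) (hz : B z z = -2) (hhz : B h z = 0)
    (hf : h - z = (2 : ℤ) • f) :
    orthoCompl B (Submodule.span ℤ ({h} : Set Λ))
        = Submodule.span ℤ ({z} : Set Λ) ⊔ orthoCompl B (Submodule.span ℤ ({f, z} : Set Λ)) ∧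
    Submodule.span ℤ ({z} : Set Λ) ⊓ orthoCompl B (Submodule.span ℤ ({f, z} : Set Λ)) = ⊥ ∧
    ∀ w ∈ orthoCompl B (Submodule.span ℤ ({f, z} : Set Λ)), B z w = 0 :=
  stmt9_general B hsymm h z f hz hhz hf
end

section
/- Let n be a positive even integer and N a positive integer. For t ∈ ℤ/nℤ, the condition '2n divides N·t̃²' is independent of the choice of integer representative t̃ of t (because n is even); let T ⊆ ℤ/nℤ be the set of all t satisfying it, and let k be the least positive integer with 2n dividing N·k². Then: (i) k divides n; (ii) T is the cyclic subgroup of ℤ/nℤ generated by k mod n, and has order n/k; (iii) the orthogonal complement of T with respect to the bilinear form b_n(x,y) = q_n(x+y) − q_n(x) − q_n(y) = 2xy/n mod 2ℤ, namely {x ∈ ℤ/nℤ : b_n(x,t) = 0 for all t ∈ T}, is the cyclic subgroup generated by n/k mod n, and has order k. -/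
/-- The value group `ℚ/2ℤ`. -/
abbrev QMod2 := AddCircle (2 : ℚ)

/-- The bilinear form `b_n(x,y) = 2xy/n mod 2ℤ` associated to the quadratic form
`q_n(k) = k²/n mod 2ℤ` on `ℤ/nℤ`. -/
def bn (n : ℕ) (x y : ZMod n) : QMod2 :=
  ((2 * (x.val : ℚ) * (y.val : ℚ) / (n : ℚ) : ℚ) : QMod2)

/-- The set `T = {t ∈ ℤ/nℤ : 2n ∣ N·t̃²}`. -/
def Tset (n N : ℕ) : Set (ZMod n) :=
  {t | (2 * (n : ℤ)) ∣ (N : ℤ) * ((t.val : ℤ)) ^ 2}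

/-- The orthogonal complement of `T` in `ℤ/nℤ` with respect to `b_n`. -/
def TperpSet (n N : ℕ) : Set (ZMod n) :=
  {x | ∀ t ∈ Tset n N, bn n x t = 0}


-- key gcd lemma
lemma keyGcd (n N : ℕ) (a b : ℤ) (ha : (2*(n:ℤ)) ∣ (N:ℤ)*a^2) (hb : (2*(n:ℤ)) ∣ (N:ℤ)*b^2) :
    (2*(n:ℤ)) ∣ (N:ℤ) * (Int.gcd a b : ℤ)^2 := by
  have hab : (2*(n:ℤ)) ∣ (N:ℤ)*a*b := by
    have h2 : (2*(n:ℤ))^2 ∣ ((N:ℤ)*a*b)^2 := by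
      have he : ((N:ℤ)*a*b)^2 = ((N:ℤ)*a^2)*((N:ℤ)*b^2) := by ring
      rw [he, sq]; exact mul_dvd_mul ha hb
    exact (Int.pow_dvd_pow_iff two_ne_zero).mp h2
  have hbez := Int.gcd_eq_gcd_ab a b
  set u := Int.gcdA a b
  set v := Int.gcdB a b
  have : (N:ℤ) * (Int.gcd a b : ℤ)^2 =
      ((N:ℤ)*a^2)*u^2 + ((N:ℤ)*b^2)*v^2 + ((N:ℤ)*a*b)*(2*u*v) := by
    rw [hbez]; ring
  rw [this]
  exact dvd_add (dvd_add (ha.mul_right _) (hb.mul_right _)) (hab.mul_right _)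

lemma rep (n N : ℕ) (hne : Even n) (a b : ℤ) (h : (n:ℤ) ∣ b - a)
    (ha : (2*(n:ℤ)) ∣ (N:ℤ)*a^2) : (2*(n:ℤ)) ∣ (N:ℤ)*b^2 := by
  obtain ⟨m, hm⟩ := h
  obtain ⟨c, hc⟩ := hne
  have hb : b = a + n*m := by linarith
  have he : (N:ℤ)*b^2 = (N:ℤ)*a^2 + (2*(n:ℤ))*((N:ℤ)*a*m) + ((N:ℤ)*m^2)*((n:ℤ)*(c:ℤ))*2 := by
    rw [hb]; have : (n:ℤ) = c + c := by exact_mod_cast hc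
    rw [this]; ring
  rw [he]
  exact dvd_add (dvd_add ha (dvd_mul_right _ _)) ⟨(N:ℤ)*m^2*(c:ℤ), by ring⟩

lemma mem_zmult_iff (n m : ℕ) (hn : n ≠ 0) (hm : m ∣ n) (x : ZMod n) :
    x ∈ AddSubgroup.zmultiples ((m : ZMod n)) ↔ m ∣ x.val := by
  haveI : NeZero n := ⟨hn⟩
  rw [AddSubgroup.mem_zmultiples_iff]
  constructor
  · rintro ⟨z, hz⟩
    have hx : ((z * (m:ℤ) : ℤ) : ZMod n) = ((x.val : ℤ) : ZMod n) := by
      push_cast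
      rw [← zsmul_eq_mul, hz]
      simp [ZMod.natCast_val, ZMod.cast_id]
    have hdvd : (n:ℤ) ∣ (x.val : ℤ) - z * m := ((ZMod.intCast_eq_intCast_iff _ _ _).mp hx).dvd
    have : (m:ℤ) ∣ (x.val:ℤ) := by
      have h1 : (m:ℤ) ∣ (x.val:ℤ) - z*m := dvd_trans (Int.natCast_dvd_natCast.mpr hm) hdvd
      have h2 : (m:ℤ) ∣ z*m := dvd_mul_left _ _
      have := dvd_add h1 h2
      simpa using this
    exact_mod_cast this
  · rintro ⟨c, hc⟩
    refine ⟨(c:ℤ), ?_⟩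
    have : x = ((x.val : ℕ) : ZMod n) := (ZMod.natCast_rightInverse x).symm
    rw [this, hc]
    push_cast
    rw [zsmul_eq_mul]
    push_cast
    ring

lemma bn_eq_zero_iff (n : ℕ) (hn : 0 < n) (x t : ZMod n) :
    bn n x t = 0 ↔ n ∣ x.val * t.val := by
  have hn' : (n:ℚ) ≠ 0 := Nat.cast_ne_zero.mpr hn.ne'
  unfold bn
  rw [AddCircle.coe_eq_zero_iff]
  constructor
  · rintro ⟨z, hz⟩
    rw [zsmul_eq_mul] at hz
    have : ((x.val * t.val : ℕ) : ℚ) = ((z * n : ℤ) : ℚ) := by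
      push_cast
      field_simp at hz ⊢
      linarith
    have h2 : ((x.val * t.val : ℕ) : ℤ) = z * n := by exact_mod_cast this
    exact Int.ofNat_dvd.mp ⟨z, by push_cast at h2 ⊢; linarith⟩
  · rintro ⟨c, hc⟩
    refine ⟨(c:ℤ), ?_⟩
    rw [zsmul_eq_mul]
    have : (x.val : ℚ) * t.val = n * c := by exact_mod_cast congrArg (Nat.cast : ℕ → ℚ) hc
    field_simp
    push_cast
    linarith

/-- Let `n` be a positive even integer and `N` a positive integer.
The condition `2n ∣ N·t̃²` on `t ∈ ℤ/nℤ` is independent of the representative `t̃`;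
let `T` be the set of `t` satisfying it and `k` the least positive integer with
`2n ∣ N·k²`.  Then `k ∣ n`; `T` is the cyclic subgroup generated by `k mod n`, of
order `n/k`; and the orthogonal complement of `T` with respect to `b_n` is the
cyclic subgroup generated by `n/k mod n`, of order `k`. -/
theorem stmt14 (n : ℕ) (hn : 0 < n) (hne : Even n) (N : ℕ) (hNpos : 0 < N)
    (k : ℕ)
    (hk : IsLeast {j : ℕ | 0 < j ∧ (2 * (n : ℤ)) ∣ (N : ℤ) * (j : ℤ) ^ 2} k) :
    (∀ a b : ℤ, (a : ZMod n) = (b : ZMod n) →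
      ((2 * (n : ℤ)) ∣ (N : ℤ) * a ^ 2 ↔ (2 * (n : ℤ)) ∣ (N : ℤ) * b ^ 2)) ∧
    (k ∣ n) ∧
    (Tset n N = ↑(AddSubgroup.zmultiples ((k : ZMod n))) ∧
      Nat.card ↥(Tset n N) = n / k) ∧
    (TperpSet n N = ↑(AddSubgroup.zmultiples (((n / k : ℕ) : ZMod n))) ∧
      Nat.card ↥(TperpSet n N) = k) := by
  have hkpos : 0 < k := hk.1.1
  have hkdvd2 : (2*(n:ℤ)) ∣ (N:ℤ)*(k:ℤ)^2 := hk.1.2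
  have Lk : ∀ j : ℕ, ((2*(n:ℤ)) ∣ (N:ℤ)*(j:ℤ)^2 ↔ k ∣ j) := by
    intro j
    constructor
    · intro hj
      have hg := keyGcd n N (j:ℤ) (k:ℤ) hj hkdvd2
      rw [Int.gcd_natCast_natCast] at hg
      have hgpos : 0 < Nat.gcd j k := Nat.gcd_pos_of_pos_right _ hkpos
      have hle : k ≤ Nat.gcd j k := hk.2 ⟨hgpos, hg⟩
      have hge : Nat.gcd j k ≤ k := Nat.le_of_dvd hkpos (Nat.gcd_dvd_right _ _)
      have heq : Nat.gcd j k = k := le_antisymm hge hle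
      rw [← heq]
      exact Nat.gcd_dvd_left _ _
    · rintro ⟨m, rfl⟩
      have he : (N:ℤ)*((k*m:ℕ):ℤ)^2 = ((N:ℤ)*(k:ℤ)^2)*(m:ℤ)^2 := by push_cast; ring
      rw [he]
      exact hkdvd2.mul_right _
  have hkn : k ∣ n := by
    apply (Lk n).mp
    obtain ⟨c, hc⟩ := hne
    refine ⟨(N:ℤ)*(c:ℤ), ?_⟩
    have hnc : (n:ℤ) = c + c := by exact_mod_cast hc
    rw [hnc]; ring
  have hTchar : ∀ t : ZMod n, t ∈ Tset n N ↔ k ∣ t.val := fun t => Lk t.val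
  have hTeq : Tset n N = ↑(AddSubgroup.zmultiples ((k : ZMod n))) := by
    ext t
    rw [SetLike.mem_coe, mem_zmult_iff n k hn.ne' hkn]
    exact hTchar t
  have hnkdvd : (n / k) ∣ n := Nat.div_dvd_of_dvd hkn
  have hPchar : ∀ x : ZMod n, x ∈ TperpSet n N ↔ (n / k) ∣ x.val := by
    intro x
    constructor
    · intro hx
      by_cases hkeq : k = n
      · rw [hkeq, Nat.div_self hn]
        exact one_dvd _
      · have hklt : k < n := lt_of_le_of_ne (Nat.le_of_dvd hn hkn) hkeq
        have htmem : (k : ZMod n) ∈ Tset n N := by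
          rw [hTchar, ZMod.val_natCast_of_lt hklt]
        have hb := hx _ htmem
        rw [bn_eq_zero_iff n hn, ZMod.val_natCast_of_lt hklt] at hb
        have hb' : (n / k) * k ∣ x.val * k := by
          rw [Nat.div_mul_cancel hkn]; exact hb
        exact (Nat.mul_dvd_mul_iff_right hkpos).mp hb'
    · intro hx t ht
      rw [bn_eq_zero_iff n hn]
      obtain ⟨a, ha⟩ := hx
      obtain ⟨b, hb⟩ := (hTchar t).mp ht
      refine ⟨a * b, ?_⟩
      calc x.val * t.val = (n / k * k) * (a * b) := by rw [ha, hb]; ring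
        _ = n * (a * b) := by rw [Nat.div_mul_cancel hkn]
  have hPeq : TperpSet n N = ↑(AddSubgroup.zmultiples (((n / k : ℕ) : ZMod n))) := by
    ext x
    rw [SetLike.mem_coe, mem_zmult_iff n (n / k) hn.ne' hnkdvd]
    exact hPchar x
  refine ⟨?_, hkn, ⟨hTeq, ?_⟩, hPeq, ?_⟩
  · intro a b hab
    have h1 : (n:ℤ) ∣ b - a := ((ZMod.intCast_eq_intCast_iff a b n).mp hab).dvd
    have h2 : (n:ℤ) ∣ a - b := by simpa [neg_sub] using dvd_neg.mpr h1
    exact ⟨rep n N hne a b h1, rep n N hne b a h2⟩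
  · rw [hTeq, SetLike.coe_sort_coe, Nat.card_zmultiples, ZMod.addOrderOf_coe k hn.ne',
      Nat.gcd_eq_right hkn]
  · rw [hPeq, SetLike.coe_sort_coe, Nat.card_zmultiples, ZMod.addOrderOf_coe (n/k) hn.ne',
      Nat.gcd_eq_right hnkdvd, Nat.div_div_self hkn hn.ne']
end
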